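/- arXiv:2512.04612 — 2 statements merged into one kernel-verified Lean document; each statement's English description precedes it below -/
import Mathlib

section
/- For every integer l ≥ 1 and every sequence of constants c_2, c_3, …, c_l there is a constant K, depending only on l and c_2,…,c_l, with the following property: whenever m ≥ 1 and X_1,…,X_m are independent real random variables with E[X_k] = 0 and E[|X_k|^j] ≤ c_j for all 2 ≤ j ≤ l and 1 ≤ k ≤ m, one has |E[(X_1 + ⋯ + X_m)^l]| ≤ K · m^⌊l/2⌋. -/
/-!
Expanding `(∑ k, X k) ^ l` over all index maps `p : Fin l → Fin m` and using independence, the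
term of `p` is `∏ k, E[X k ^ aₖ]`, where `aₖ` is the size of the fibre of `p` over `k`. It vanishes
as soon as some `aₖ = 1`, since the `X k` are centred; otherwise every nonempty fibre has at least
two points, so `p` takes at most `⌊l / 2⌋` values and its term is at most `C ^ ⌊l / 2⌋`, where
`C ≥ 1` bounds `c 2, …, c l`. Such maps factor through `Fin ⌊l / 2⌋`, so there are at most
`⌊l / 2⌋ ^ l * m ^ ⌊l / 2⌋` of them.

The moment hypotheses say nothing unless the moments are integrable. If `(∑ k, X k) ^ l` is not
integrable, its integral is `0`; if it is, independence forces every `X k` into `Lˡ`.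
-/

open MeasureTheory ProbabilityTheory Finset
open scoped ENNReal

section

variable {Ω : Type*} [MeasurableSpace Ω] {μ : Measure Ω}

/-- By Fubini on the joint law `μ.map f ⊗ μ.map g`, the map `x ↦ x + y` lies in `Lᵖ` of the law
of `f` for almost every `y`. -/
theorem ProbabilityTheory.IndepFun.memLp_of_memLp_add {E : Type*} [IsProbabilityMeasure μ]
    [NormedAddCommGroup E] [MeasurableSpace E] [BorelSpace E] [SecondCountableTopology E]
    {f g : Ω → E} {p : ℝ≥0∞}
    (hfg : IndepFun f g μ) (hf : AEMeasurable f μ) (hg : AEMeasurable g μ) (hp : p ≠ ∞)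
    (h : MemLp (f + g) p μ) : MemLp f p μ := by
  rcases eq_or_ne p 0 with rfl | hp0
  · exact memLp_zero_iff_aestronglyMeasurable.2 hf.aestronglyMeasurable
  have : IsProbabilityMeasure (μ.map f) := Measure.isProbabilityMeasure_map hf
  have : IsProbabilityMeasure (μ.map g) := Measure.isProbabilityMeasure_map hg
  set φ : E × E → ℝ := fun z => ‖z.1 + z.2‖ ^ p.toReal
  have hφ : Continuous φ :=
    (continuous_fst.add continuous_snd).norm.rpow_const fun _ => Or.inr ENNReal.toReal_nonneg
  have hφ_int : Integrable φ ((μ.map f).prod (μ.map g)) := by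
    rw [← hfg.map_prod_eq_prod_map_map hf hg, integrable_map_measure
      hφ.aestronglyMeasurable (hf.prodMk hg)]
    exact h.integrable_norm_rpow hp0 hp
  obtain ⟨y, hy⟩ := hφ_int.prod_left_ae.exists
  have hshift : MemLp (fun x => x + y) p (μ.map f) :=
    (integrable_norm_rpow_iff (by fun_prop) hp0 hp).1 hy
  have hid : MemLp id p (μ.map f) := by
    convert hshift.sub (memLp_const y) using 1
    ext x
    simp
  exact (memLp_map_measure_iff aestronglyMeasurable_id hf).1 hid

theorem ProbabilityTheory.iIndepFun.memLp_of_memLp_sum {ι E : Type*} [Fintype ι]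
    [IsProbabilityMeasure μ] [NormedAddCommGroup E] [MeasurableSpace E]
    [BorelSpace E] [SecondCountableTopology E] {X : ι → Ω → E} {p : ℝ≥0∞}
    (hX : iIndepFun X μ) (hXm : ∀ i, Measurable (X i)) (hp : p ≠ ∞)
    (h : MemLp (fun ω => ∑ i, X i ω) p μ) (i : ι) : MemLp (X i) p μ := by
  classical
  have hindep : IndepFun (X i) (fun ω => ∑ j ∈ univ.erase i, X j ω) μ := by
    simpa only [Finset.sum_fn] using
      (hX.indepFun_finsetSum_of_notMem hXm (notMem_erase i univ)).symm
  refine hindep.memLp_of_memLp_add (hXm i).aemeasurable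
    (measurable_sum _ fun j _ => hXm j).aemeasurable hp ?_
  convert h using 1
  ext ω
  simp

theorem MeasureTheory.memLp_of_integrable_pow {f : Ω → ℝ} (hf : AEStronglyMeasurable f μ)
    {n : ℕ} (hn : n ≠ 0) (h : Integrable (fun ω => f ω ^ n) μ) : MemLp f n μ := by
  refine (integrable_norm_rpow_iff hf (by exact_mod_cast hn) (by simp)).1 ?_
  simpa [Real.norm_eq_abs, abs_pow] using h.abs

theorem MeasureTheory.integrable_prod_of_memLp {𝕜 : Type*} [NormedCommRing 𝕜] {n : ℕ}
    (hn : n ≠ 0) {f : Fin n → Ω → 𝕜} (hf : ∀ i, MemLp (f i) n μ) :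
    Integrable (fun ω => ∏ i, f i ω) μ := by
  have hexp : (∑ _i : Fin n, (n : ℝ≥0∞)⁻¹)⁻¹ = 1 := by
    rw [sum_const, card_univ, Fintype.card_fin, nsmul_eq_mul,
      ENNReal.mul_inv_cancel (by exact_mod_cast hn) (by simp), inv_one]
  rw [← memLp_one_iff_integrable, ← hexp]
  exact MemLp.prod' fun i _ => hf i

theorem Fintype.prod_comp_eq_prod_pow_card_fiber {α β M : Type*} [Fintype α] [Fintype β]
    [DecidableEq β] [CommMonoid M] (f : β → M) (p : α → β) :
    ∏ a, f (p a) = ∏ b, f b ^ #{a | p a = b} := by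
  rw [← Finset.prod_fiberwise' univ p f]
  exact Finset.prod_congr rfl fun b _ => prod_const _

theorem ProbabilityTheory.iIndepFun.integral_sum_pow {ι : Type*} [Fintype ι] [DecidableEq ι]
    {X : ι → Ω → ℝ} (hX : iIndepFun X μ) (hXm : ∀ i, AEMeasurable (X i) μ) {n : ℕ} (hn : n ≠ 0)
    (hLp : ∀ i, MemLp (X i) n μ) :
    ∫ ω, (∑ i, X i ω) ^ n ∂μ = ∑ p : Fin n → ι, ∏ i, ∫ ω, X i ω ^ #{j | p j = i} ∂μ := by
  simp_rw [Fintype.sum_pow]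
  rw [integral_finsetSum _ fun p _ => integrable_prod_of_memLp hn fun j => hLp (p j)]
  refine sum_congr rfl fun p _ => ?_
  rw [← hX.integral_fun_prod_comp hXm fun i => (continuous_pow _).aestronglyMeasurable]
  congr 1 with ω
  exact Fintype.prod_comp_eq_prod_pow_card_fiber (fun i => X i ω) p

end

theorem abs_prod_moments_le {ι : Type*} [Fintype ι] [DecidableEq ι] {n : ℕ} {M : ι → ℕ → ℝ}
    {C : ℝ} (hC : 1 ≤ C) (hM0 : ∀ i, M i 0 = 1) (hM1 : ∀ i, M i 1 = 0)
    (hM : ∀ i j, 2 ≤ j → j ≤ n → |M i j| ≤ C) (p : Fin n → ι) :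
    |∏ i, M i #{j | p j = i}| ≤ if #(univ.image p) ≤ n / 2 then C ^ (n / 2) else 0 := by
  by_cases hsingle : ∃ i, #{j | p j = i} = 1
  · obtain ⟨i, hi⟩ := hsingle
    rw [prod_eq_zero (mem_univ i) (by rw [hi, hM1]), abs_zero]
    split_ifs <;> positivity
  push Not at hsingle
  have hfiber_le : ∀ i, #{j | p j = i} ≤ n := fun i =>
    (card_filter_le _ _).trans (card_fin n).le
  have htwo : ∀ i ∈ univ.image p, 2 ≤ #{j | p j = i} := by
    intro i hi
    obtain ⟨j, -, rfl⟩ := mem_image.1 hi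
    have : 0 < #{j' | p j' = p j} := card_pos.2 ⟨j, by simp⟩
    have := hsingle (p j)
    omega
  have himage : #(univ.image p) ≤ n / 2 := by
    have hsum : n = ∑ i ∈ univ.image p, #{j | p j = i} := by
      simpa using card_eq_sum_card_image p (univ : Finset (Fin n))
    have := card_nsmul_le_sum _ _ 2 htwo
    rw [smul_eq_mul] at this
    omega
  rw [if_pos himage, abs_prod, ← prod_subset (subset_univ (univ.image p))]
  · calc ∏ i ∈ univ.image p, |M i #{j | p j = i}| ≤ ∏ _i ∈ univ.image p, C :=
          prod_le_prod (fun _ _ => abs_nonneg _) fun i hi => hM i _ (htwo i hi) (hfiber_le i)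
      _ = C ^ #(univ.image p) := prod_const C
      _ ≤ C ^ (n / 2) := pow_le_pow_right₀ hC himage
  · intro i _ hi
    have : #{j | p j = i} = 0 := by
      rw [card_eq_zero, filter_eq_empty_iff]
      exact fun j _ hj => hi (hj ▸ mem_image_of_mem p (mem_univ j))
    rw [this, hM0, abs_one]

theorem Fintype.exists_comp_eq_of_card_image_le {α β : Type*} [Fintype α] [DecidableEq β]
    [Nonempty β] {r : ℕ} {p : α → β} (h : #(univ.image p) ≤ r) :
    ∃ (f : α → Fin r) (g : Fin r → β), g ∘ f = p := by
  set s := univ.image p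
  let e : s ↪ Fin r := s.equivFin.toEmbedding.trans (Fin.castLEEmb h)
  refine ⟨fun a => e ⟨p a, mem_image_of_mem p (mem_univ a)⟩,
    Function.extend e Subtype.val fun _ => Classical.arbitrary β, funext fun a => ?_⟩
  exact e.injective.extend_apply _ _ _

theorem Fintype.card_filter_card_image_le {α β : Type*} [Fintype α] [DecidableEq α] [Fintype β]
    [DecidableEq β] [Nonempty β] (r : ℕ) :
    #{p : α → β | #(univ.image p) ≤ r} ≤ r ^ Fintype.card α * Fintype.card β ^ r := by
  calc #{p : α → β | #(univ.image p) ≤ r}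
      ≤ #((univ : Finset ((α → Fin r) × (Fin r → β))).image fun fg => fg.2 ∘ fg.1) := by
        refine card_le_card fun p hp => ?_
        obtain ⟨f, g, hfg⟩ := exists_comp_eq_of_card_image_le (mem_filter.1 hp).2
        exact mem_image.2 ⟨(f, g), mem_univ _, hfg⟩
    _ ≤ _ := card_image_le
    _ = r ^ Fintype.card α * Fintype.card β ^ r := by simp

theorem abs_sum_prod_moments_le {ι : Type*} [Fintype ι] [DecidableEq ι] [Nonempty ι] {n : ℕ}
    {M : ι → ℕ → ℝ} {C : ℝ} (hC : 1 ≤ C) (hM0 : ∀ i, M i 0 = 1) (hM1 : ∀ i, M i 1 = 0)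
    (hM : ∀ i j, 2 ≤ j → j ≤ n → |M i j| ≤ C) :
    |∑ p : Fin n → ι, ∏ i, M i #{j | p j = i}|
      ≤ ((n / 2 : ℕ) : ℝ) ^ n * C ^ (n / 2) * (Fintype.card ι : ℝ) ^ (n / 2) := by
  calc |∑ p : Fin n → ι, ∏ i, M i #{j | p j = i}|
      ≤ ∑ p : Fin n → ι, |∏ i, M i #{j | p j = i}| := abs_sum_le_sum_abs _ _
    _ ≤ ∑ p : Fin n → ι, if #(univ.image p) ≤ n / 2 then C ^ (n / 2) else 0 :=
        sum_le_sum fun p _ => abs_prod_moments_le hC hM0 hM1 hM p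
    _ = #{p : Fin n → ι | #(univ.image p) ≤ n / 2} * C ^ (n / 2) := by
        rw [← sum_filter, sum_const, nsmul_eq_mul]
    _ ≤ ((n / 2) ^ n * Fintype.card ι ^ (n / 2) : ℕ) * C ^ (n / 2) := by
        gcongr
        simpa using Fintype.card_filter_card_image_le (α := Fin n) (β := ι) (n / 2)
    _ = _ := by
        push_cast
        ring

/-- For every integer `l ≥ 1` and constants `c 2, …, c l` there is a constant
`K` (depending only on `l` and the `c j`) such that for all `m ≥ 1` and all independent real
random variables `X 0, …, X (m-1)` with mean zero and `E |X k| ^ j ≤ c j` for `2 ≤ j ≤ l`,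
one has `|E[(X 0 + ⋯ + X (m-1)) ^ l]| ≤ K * m ^ ⌊l / 2⌋`. -/
theorem statement0 (l : ℕ) (hl : 1 ≤ l) (c : ℕ → ℝ) :
    ∃ K : ℝ, ∀ (Ω : Type) (_ : MeasurableSpace Ω) (μ : Measure Ω),
      IsProbabilityMeasure μ →
      ∀ m : ℕ, 1 ≤ m →
      ∀ X : Fin m → Ω → ℝ,
        (∀ k, Measurable (X k)) →
        iIndepFun X μ →
        (∀ k, ∫ ω, X k ω ∂μ = 0) →
        (∀ k, ∀ j : ℕ, 2 ≤ j → j ≤ l → ∫ ω, |X k ω| ^ j ∂μ ≤ c j) →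
        |∫ ω, (∑ k, X k ω) ^ l ∂μ| ≤ K * (m : ℝ) ^ (l / 2) := by
  classical
  obtain ⟨C, hC⟩ := (insert 1 ((Icc 2 l).image c)).bddAbove
  have hC1 : 1 ≤ C := hC (by simp)
  refine ⟨((l / 2 : ℕ) : ℝ) ^ l * C ^ (l / 2), fun Ω _ μ _ m hm X hXm hXi hX0 hXc => ?_⟩
  have hl0 : l ≠ 0 := by omega
  by_cases hI : Integrable (fun ω => (∑ k, X k ω) ^ l) μ
  swap
  · rw [integral_undef hI, abs_zero]
    positivity
  have hLp : ∀ k, MemLp (X k) l μ := hXi.memLp_of_memLp_sum hXm (by simp)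
    (memLp_of_integrable_pow (by fun_prop) hl0 hI)
  have hmoment : ∀ k j, 2 ≤ j → j ≤ l → |∫ ω, X k ω ^ j ∂μ| ≤ C := fun k j hj2 hjl =>
    calc |∫ ω, X k ω ^ j ∂μ| ≤ ∫ ω, |X k ω| ^ j ∂μ := by
          simp_rw [← abs_pow]
          exact abs_integral_le_integral_abs
      _ ≤ c j := hXc k j hj2 hjl
      _ ≤ C := hC (mem_insert_of_mem (mem_image_of_mem c (mem_Icc.2 ⟨hj2, hjl⟩)))
  have : Nonempty (Fin m) := ⟨⟨0, hm⟩⟩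
  rw [hXi.integral_sum_pow (fun k => (hXm k).aemeasurable) hl0 hLp]
  simpa using abs_sum_prod_moments_le hC1 (M := fun k j => ∫ ω, X k ω ^ j ∂μ) (by simp)
    (by simpa using hX0) hmoment
end

section
/- In the symmetric-circulant empirical eigenvalue model, there is a constant K, depending only on the uniform moment bounds of the input variables, such that for every n ≥ 1 and all 0 ≤ t_1 ≤ t_2 ≤ t_3 < ∞: E[ |Y_n(t_3) − Y_n(t_2)|² · |Y_n(t_2) − Y_n(t_1)|² ] ≤ K (t_3 − t_1)². (Tightness estimate from the proof of Theorem 3.4 of the paper.) -/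
/-!
Both increments `Y_n(t₃) - Y_n(t₂)` and `Y_n(t₂) - Y_n(t₁)` are `n⁻¹` times sums `∑ c_v X_v`
over disjoint sets of indices `v = (j, k)`, with weights `c_v` that are functions of `U_n`
bounded by `2`. Expanding the product of the two squares, independence of `U_n` from the `X`'s
and of the `X`'s among themselves kills every term except those of the form
`c_v² c_u² X_v² X_u²`, so the expectation is at most `2⁴` times the product of the two index
counts, which is `≤ n⁴ (t₃ - t₁)²`.
-/

open MeasureTheory ProbabilityTheory Filter

/-- The random walk `S_j^{(n)}(t) = ∑_{k=1}^{⌊nt⌋} X_{j,k}` (steps indexed by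
`k = 0, 1, 2, …`). -/
noncomputable def Swalk {Ω : Type} (X : ℕ → ℕ → Ω → ℝ) (n : ℕ) (j : ℕ) (t : ℝ) (ω : Ω) : ℝ :=
  ∑ k ∈ Finset.range ⌊(n : ℝ) * t⌋₊, X j k ω

/-- The randomly chosen eigenvalue
`Y_n(t) = n⁻¹ [S_0^{(n)}(t) + 2 ∑_{j=1}^{⌊n/2⌋} S_j^{(n)}(t) cos(2π U_n j / n)]` of the scaled
symmetric circulant matrix `n⁻¹ A_n(t)`. -/
noncomputable def Yproc {Ω : Type} (X : ℕ → ℕ → Ω → ℝ) (U : ℕ → Ω → ℕ) (n : ℕ) (t : ℝ)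
    (ω : Ω) : ℝ :=
  (n : ℝ)⁻¹ * (Swalk X n 0 t ω +
    2 * ∑ j ∈ Finset.Icc 1 (n / 2),
      Swalk X n j t ω * Real.cos (2 * Real.pi * (U n ω : ℝ) * (j : ℝ) / (n : ℝ)))

open Finset

section WeightedSums

variable {Ω ι : Type*} {mΩ : MeasurableSpace Ω} {μ : Measure Ω}

structure IsStandardizedIndep (ξ : ι → Ω → ℝ) (μ : Measure Ω) : Prop where
  measurable : ∀ i, Measurable (ξ i)
  iIndepFun : iIndepFun ξ μ
  integral_eq_zero : ∀ i, ∫ ω, ξ i ω ∂μ = 0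
  integral_sq_eq_one : ∀ i, ∫ ω, ξ i ω ^ 2 ∂μ = 1

namespace IsStandardizedIndep

variable {ξ : ι → Ω → ℝ}

lemma memLp_two (hξ : IsStandardizedIndep ξ μ) (i : ι) : MemLp (ξ i) 2 μ :=
  (memLp_two_iff_integrable_sq (hξ.measurable i).aestronglyMeasurable).2 <|
    Integrable.of_integral_ne_zero (by simp [hξ.integral_sq_eq_one i])

lemma integrable_mul (hξ : IsStandardizedIndep ξ μ) (i j : ι) : Integrable (ξ i * ξ j) μ :=
  (hξ.memLp_two i).integrable_mul (hξ.memLp_two j)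

lemma integral_mul_eq_ite [DecidableEq ι] (hξ : IsStandardizedIndep ξ μ) (i j : ι) :
    ∫ ω, ξ i ω * ξ j ω ∂μ = if i = j then 1 else 0 := by
  rcases eq_or_ne i j with rfl | hij
  · simpa [sq] using hξ.integral_sq_eq_one i
  · rw [if_neg hij, (hξ.iIndepFun.indepFun hij).integral_fun_mul_eq_mul_integral
      (hξ.measurable i).aestronglyMeasurable (hξ.measurable j).aestronglyMeasurable,
      hξ.integral_eq_zero i, zero_mul]

variable [IsProbabilityMeasure μ] {m : MeasurableSpace Ω} {c : ι → Ω → ℝ} {C : ℝ}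

lemma integral_weighted_four_le [DecidableEq ι] (hξ : IsStandardizedIndep ξ μ) (hm : m ≤ mΩ)
    (hc : ∀ i, Measurable[m] (c i)) (hC : ∀ i ω, |c i ω| ≤ C)
    (hcξ : Indep m (⨆ i, MeasurableSpace.comap (ξ i) inferInstance) μ)
    {i j k l : ι} (hik : i ≠ k) (hil : i ≠ l) (hjk : j ≠ k) (hjl : j ≠ l) :
    Integrable (fun ω ↦ c i ω * ξ i ω * (c j ω * ξ j ω) * (c k ω * ξ k ω * (c l ω * ξ l ω))) μ ∧
      ∫ ω, c i ω * ξ i ω * (c j ω * ξ j ω) * (c k ω * ξ k ω * (c l ω * ξ l ω)) ∂μ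
        ≤ C ^ 4 * ((if i = j then 1 else 0) * (if k = l then 1 else 0)) := by
  set W := c i * c j * (c k * c l)
  set Q := ξ i * ξ j * (ξ k * ξ l)
  have hWm : Measurable[m] W := ((hc i).mul (hc j)).mul ((hc k).mul (hc l))
  have hW : ∀ ω, |W ω| ≤ C ^ 4 := fun ω ↦ by
    have hC0 : 0 ≤ C := (abs_nonneg _).trans (hC i ω)
    simp only [W, Pi.mul_apply, abs_mul]
    calc _ ≤ C * C * (C * C) := by gcongr <;> exact hC _ ω
      _ = C ^ 4 := by ring
  have hWint : Integrable W μ :=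
    (integrable_const (C ^ 4)).mono' (hWm.mono hm le_rfl).aestronglyMeasurable (ae_of_all _ hW)
  have hξm : ∀ i, Measurable[⨆ i, MeasurableSpace.comap (ξ i) inferInstance] (ξ i) :=
    fun i ↦ Measurable.of_comap_le (le_iSup (fun i ↦ MeasurableSpace.comap (ξ i) _) i)
  have hWQ : IndepFun W Q μ := indep_of_indep_of_le_right (indep_of_indep_of_le_left hcξ
    hWm.comap_le) (((hξm i).mul (hξm j)).mul ((hξm k).mul (hξm l))).comap_le
  have hQ : IndepFun (ξ i * ξ j) (ξ k * ξ l) μ :=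
    hξ.iIndepFun.indepFun_mul_mul hξ.measurable i j k l hik hil hjk hjl
  have hQint : Integrable Q μ := hQ.integrable_mul (hξ.integrable_mul i j) (hξ.integrable_mul k l)
  have hQval : ∫ ω, Q ω ∂μ = (if i = j then 1 else 0) * (if k = l then 1 else 0) := by
    rw [← hξ.integral_mul_eq_ite, ← hξ.integral_mul_eq_ite]
    exact hQ.integral_mul_eq_mul_integral (hξ.integrable_mul i j).1 (hξ.integrable_mul k l).1
  have hWQeq : (fun ω ↦ c i ω * ξ i ω * (c j ω * ξ j ω) * (c k ω * ξ k ω * (c l ω * ξ l ω)))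
      = fun ω ↦ W ω * Q ω := by
    funext ω
    simp only [W, Q, Pi.mul_apply]
    ring
  rw [hWQeq]
  refine ⟨hQint.bdd_mul hWint.1 (ae_of_all _ hW), ?_⟩
  rw [hWQ.integral_fun_mul_eq_mul_integral hWint.1 hQint.1, hQval]
  have hδ : (0 : ℝ) ≤ (if i = j then 1 else 0) * (if k = l then 1 else 0) := by
    split_ifs <;> norm_num
  refine mul_le_mul_of_nonneg_right ?_ hδ
  calc ∫ ω, W ω ∂μ ≤ ∫ _, C ^ 4 ∂μ :=
        integral_mono hWint (integrable_const _) fun ω ↦ le_of_abs_le (hW ω)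
    _ = C ^ 4 := by simp

lemma integral_sum_sq_mul_sum_sq_le [DecidableEq ι] (hξ : IsStandardizedIndep ξ μ)
    (hm : m ≤ mΩ) (hc : ∀ i, Measurable[m] (c i)) (hC : ∀ i ω, |c i ω| ≤ C)
    (hcξ : Indep m (⨆ i, MeasurableSpace.comap (ξ i) inferInstance) μ)
    {S T : Finset ι} (hST : Disjoint S T) :
    ∫ ω, (∑ i ∈ S, c i ω * ξ i ω) ^ 2 * (∑ k ∈ T, c k ω * ξ k ω) ^ 2 ∂μ ≤ C ^ 4 * #S * #T := by
  set P : ι × ι → Ω → ℝ := fun x ω ↦ c x.1 ω * ξ x.1 ω * (c x.2 ω * ξ x.2 ω)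
  set δ : ι × ι → ℝ := fun x ↦ if x.1 = x.2 then 1 else 0
  have hsq : ∀ (R : Finset ι) ω, (∑ i ∈ R, c i ω * ξ i ω) ^ 2 = ∑ x ∈ R ×ˢ R, P x ω :=
    fun R ω ↦ by rw [sq, sum_mul_sum, sum_product]
  have hδ : ∀ R : Finset ι, ∑ x ∈ R ×ˢ R, δ x = #R := fun R ↦ by
    rw [sum_product]
    simp [δ]
  have hterm : ∀ x ∈ S ×ˢ S, ∀ y ∈ T ×ˢ T,
      Integrable (fun ω ↦ P x ω * P y ω) μ ∧ ∫ ω, P x ω * P y ω ∂μ ≤ C ^ 4 * (δ x * δ y) := by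
    intro x hx y hy
    simp only [mem_product] at hx hy
    have hne : ∀ {i k}, i ∈ S → k ∈ T → i ≠ k := fun hi hk h ↦ disjoint_left.1 hST hi (h ▸ hk)
    exact hξ.integral_weighted_four_le hm hc hC hcξ (hne hx.1 hy.1) (hne hx.1 hy.2)
      (hne hx.2 hy.1) (hne hx.2 hy.2)
  simp_rw [hsq, sum_mul_sum]
  rw [integral_finsetSum _ fun x hx ↦ integrable_finsetSum _ fun y hy ↦ (hterm x hx y hy).1]
  calc ∑ x ∈ S ×ˢ S, ∫ ω, ∑ y ∈ T ×ˢ T, P x ω * P y ω ∂μ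
      = ∑ x ∈ S ×ˢ S, ∑ y ∈ T ×ˢ T, ∫ ω, P x ω * P y ω ∂μ :=
        sum_congr rfl fun x hx ↦ integral_finsetSum _ fun y hy ↦ (hterm x hx y hy).1
    _ ≤ ∑ x ∈ S ×ˢ S, ∑ y ∈ T ×ˢ T, C ^ 4 * (δ x * δ y) :=
        sum_le_sum fun x hx ↦ sum_le_sum fun y hy ↦ (hterm x hx y hy).2
    _ = C ^ 4 * ((∑ x ∈ S ×ˢ S, δ x) * ∑ y ∈ T ×ˢ T, δ y) := by
        rw [sum_mul_sum, mul_sum]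
        simp only [mul_sum]
    _ = C ^ 4 * #S * #T := by rw [hδ, hδ, mul_assoc]

end IsStandardizedIndep

end WeightedSums

noncomputable def circulantWeight (n j r : ℕ) : ℝ :=
  if j = 0 then 1 else 2 * Real.cos (2 * Real.pi * r * j / n)

lemma abs_circulantWeight_le (n j r : ℕ) : |circulantWeight n j r| ≤ 2 := by
  unfold circulantWeight
  split_ifs
  · norm_num
  · rw [abs_mul, abs_two]
    linarith [Real.abs_cos_le_one (2 * Real.pi * r * j / n)]

noncomputable def incrementSupport (n : ℕ) (s t : ℝ) : Finset (ℕ × ℕ) :=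
  range (n / 2 + 1) ×ˢ Ico ⌊(n : ℝ) * s⌋₊ ⌊(n : ℝ) * t⌋₊

section Model

variable {Ω : Type} (X : ℕ → ℕ → Ω → ℝ) (U : ℕ → Ω → ℕ) (n : ℕ) (ω : Ω)

lemma Yproc_eq_sum (t : ℝ) : Yproc X U n t ω =
    (n : ℝ)⁻¹ * ∑ j ∈ range (n / 2 + 1), circulantWeight n j (U n ω) * Swalk X n j t ω := by
  rw [Nat.range_succ_eq_Icc_zero, ← insert_Icc_add_one_left_eq_Icc (Nat.zero_le _),
    sum_insert (by simp), Yproc, mul_sum]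
  congr 2
  · simp [circulantWeight]
  · refine sum_congr rfl fun j hj ↦ ?_
    rw [circulantWeight, if_neg (by simp at hj; omega)]
    ring

lemma Swalk_sub_Swalk (j : ℕ) {s t : ℝ} (hst : s ≤ t) :
    Swalk X n j t ω - Swalk X n j s ω = ∑ k ∈ Ico ⌊(n : ℝ) * s⌋₊ ⌊(n : ℝ) * t⌋₊, X j k ω :=
  (sum_Ico_eq_sub _ (Nat.floor_mono (by gcongr))).symm

lemma Yproc_sub_Yproc {s t : ℝ} (hst : s ≤ t) : Yproc X U n t ω - Yproc X U n s ω =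
    (n : ℝ)⁻¹ * ∑ v ∈ incrementSupport n s t, circulantWeight n v.1 (U n ω) * X v.1 v.2 ω := by
  rw [Yproc_eq_sum, Yproc_eq_sum, ← mul_sub, ← sum_sub_distrib, incrementSupport, sum_product]
  simp only [← mul_sub, Swalk_sub_Swalk X n ω _ hst, mul_sum]

end Model

lemma floor_sub_floor_mul_floor_sub_floor_le {x y z : ℝ} (hx : 0 ≤ x) (hxy : x ≤ y)
    (hyz : y ≤ z) : ((⌊z⌋₊ : ℝ) - ⌊y⌋₊) * ((⌊y⌋₊ : ℝ) - ⌊x⌋₊) ≤ (z - x) ^ 2 := by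
  rcases (Nat.floor_mono hxy).eq_or_lt with hab | hab
  · rw [hab, sub_self, mul_zero]
    positivity
  rcases (Nat.floor_mono hyz).eq_or_lt with hbc | hbc
  · rw [hbc, sub_self, zero_mul]
    positivity
  have hab' : (⌊x⌋₊ : ℝ) + 1 ≤ ⌊y⌋₊ := by exact_mod_cast hab
  have hbc' : (⌊y⌋₊ : ℝ) + 1 ≤ ⌊z⌋₊ := by exact_mod_cast hbc
  -- `⌊z⌋₊ - ⌊x⌋₊ < z - x + 1` and `2 ≤ ⌊z⌋₊ - ⌊x⌋₊`
  have hspan : (⌊z⌋₊ : ℝ) - ⌊x⌋₊ ≤ 2 * (z - x) := by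
    linarith [Nat.floor_le (hx.trans (hxy.trans hyz)), Nat.lt_floor_add_one x]
  nlinarith [sq_nonneg ((⌊z⌋₊ : ℝ) - 2 * ⌊y⌋₊ + ⌊x⌋₊)]

lemma card_incrementSupport_le {n : ℕ} (hn : 1 ≤ n) {s t : ℝ} (hst : s ≤ t) :
    (#(incrementSupport n s t) : ℝ) ≤ n * ((⌊(n : ℝ) * t⌋₊ : ℝ) - ⌊(n : ℝ) * s⌋₊) := by
  have hfloor : ⌊(n : ℝ) * s⌋₊ ≤ ⌊(n : ℝ) * t⌋₊ := Nat.floor_mono (by gcongr)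
  rw [incrementSupport, card_product, card_range, Nat.card_Ico, Nat.cast_mul,
    Nat.cast_sub hfloor]
  gcongr
  · exact sub_nonneg.2 (by exact_mod_cast hfloor)
  · exact_mod_cast (by omega : n / 2 + 1 ≤ n)

lemma card_incrementSupport_mul_card_le {n : ℕ} (hn : 1 ≤ n) {t₁ t₂ t₃ : ℝ} (ht₁ : 0 ≤ t₁)
    (h12 : t₁ ≤ t₂) (h23 : t₂ ≤ t₃) :
    (#(incrementSupport n t₂ t₃) : ℝ) * #(incrementSupport n t₁ t₂) ≤ n ^ 4 * (t₃ - t₁) ^ 2 := by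
  have h32 : (0 : ℝ) ≤ n * ((⌊(n : ℝ) * t₃⌋₊ : ℝ) - ⌊(n : ℝ) * t₂⌋₊) :=
    (Nat.cast_nonneg _).trans (card_incrementSupport_le hn h23)
  calc _ ≤ n * ((⌊(n : ℝ) * t₃⌋₊ : ℝ) - ⌊(n : ℝ) * t₂⌋₊)
          * (n * ((⌊(n : ℝ) * t₂⌋₊ : ℝ) - ⌊(n : ℝ) * t₁⌋₊)) :=
        mul_le_mul (card_incrementSupport_le hn h23) (card_incrementSupport_le hn h12)
          (Nat.cast_nonneg _) h32
    _ = n ^ 2 * (((⌊(n : ℝ) * t₃⌋₊ : ℝ) - ⌊(n : ℝ) * t₂⌋₊)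
          * ((⌊(n : ℝ) * t₂⌋₊ : ℝ) - ⌊(n : ℝ) * t₁⌋₊)) := by ring
    _ ≤ n ^ 2 * ((n : ℝ) * t₃ - n * t₁) ^ 2 := by
        gcongr
        exact floor_sub_floor_mul_floor_sub_floor_le (by positivity) (by gcongr) (by gcongr)
    _ = n ^ 4 * (t₃ - t₁) ^ 2 := by ring

theorem statement11_general {Ω : Type} [MeasurableSpace Ω] (μ : Measure Ω) [IsProbabilityMeasure μ]
    (X : ℕ → ℕ → Ω → ℝ) (U : ℕ → Ω → ℕ)
    (hmeas : ∀ j k, Measurable (X j k))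
    (hindep : iIndepFun (fun v : ℕ × ℕ => X v.1 v.2) μ)
    (hmean : ∀ j k, ∫ ω, X j k ω ∂μ = 0)
    (hvar : ∀ j k, ∫ ω, (X j k ω) ^ 2 ∂μ = 1)
    (hUmeas : ∀ n, Measurable (U n))
    (hUindep : ∀ n, Indep (MeasurableSpace.comap (U n) inferInstance)
      (⨆ v : ℕ × ℕ, MeasurableSpace.comap (X v.1 v.2) inferInstance) μ) :
    ∃ K : ℝ, ∀ n : ℕ, 1 ≤ n → ∀ t₁ t₂ t₃ : ℝ, 0 ≤ t₁ → t₁ ≤ t₂ → t₂ ≤ t₃ →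
      ∫ ω, |Yproc X U n t₃ ω - Yproc X U n t₂ ω| ^ 2
          * |Yproc X U n t₂ ω - Yproc X U n t₁ ω| ^ 2 ∂μ
        ≤ K * (t₃ - t₁) ^ 2 := by
  have hX : IsStandardizedIndep (fun v : ℕ × ℕ ↦ X v.1 v.2) μ :=
    ⟨fun v ↦ hmeas v.1 v.2, hindep, fun v ↦ hmean v.1 v.2, fun v ↦ hvar v.1 v.2⟩
  refine ⟨2 ^ 4, fun n hn t₁ t₂ t₃ ht₁ h12 h23 ↦ ?_⟩
  have hdisj : Disjoint (incrementSupport n t₂ t₃) (incrementSupport n t₁ t₂) :=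
    disjoint_product.2 (Or.inr (Ico_disjoint_Ico_consecutive _ _ _).symm)
  have hmoment := hX.integral_sum_sq_mul_sum_sq_le
    (c := fun (v : ℕ × ℕ) ω ↦ circulantWeight n v.1 (U n ω)) (hUmeas n).comap_le
    (fun v ↦ (measurable_from_nat (f := circulantWeight n v.1)).comp (comap_measurable (U n)))
    (fun v ω ↦ abs_circulantWeight_le n v.1 (U n ω)) (hUindep n) hdisj
  simp_rw [sq_abs, Yproc_sub_Yproc X U n _ h23, Yproc_sub_Yproc X U n _ h12]
  calc _ = ((n : ℝ)⁻¹) ^ 4 * ∫ ω, (∑ v ∈ incrementSupport n t₂ t₃,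
          circulantWeight n v.1 (U n ω) * X v.1 v.2 ω) ^ 2 * (∑ v ∈ incrementSupport n t₁ t₂,
          circulantWeight n v.1 (U n ω) * X v.1 v.2 ω) ^ 2 ∂μ := by
        rw [← integral_const_mul]
        congr 1 with ω
        ring
    _ ≤ ((n : ℝ)⁻¹) ^ 4
          * (2 ^ 4 * #(incrementSupport n t₂ t₃) * #(incrementSupport n t₁ t₂)) :=
        mul_le_mul_of_nonneg_left hmoment (by positivity)
    _ ≤ ((n : ℝ)⁻¹) ^ 4 * (2 ^ 4 * (n ^ 4 * (t₃ - t₁) ^ 2)) := by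
        rw [mul_assoc (2 ^ 4 : ℝ)]
        gcongr _ * (_ * ?_)
        exact card_incrementSupport_mul_card_le hn ht₁ h12 h23
    _ = 2 ^ 4 * (t₃ - t₁) ^ 2 := by
        field_simp

/-- tightness estimate from the proof of Theorem 3.4 of the paper. In the
symmetric-circulant empirical eigenvalue model there is a constant `K` (depending only on the
uniform moment bounds) such that for all `n ≥ 1` and `0 ≤ t₁ ≤ t₂ ≤ t₃`,
`E[ |Y_n(t₃) − Y_n(t₂)|² |Y_n(t₂) − Y_n(t₁)|² ] ≤ K (t₃ − t₁)²`. -/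
theorem statement11 {Ω : Type} [MeasurableSpace Ω] (μ : Measure Ω) [IsProbabilityMeasure μ]
    (X : ℕ → ℕ → Ω → ℝ) (U : ℕ → Ω → ℕ)
    (hmeas : ∀ j k, Measurable (X j k))
    (hindep : iIndepFun (fun v : ℕ × ℕ => X v.1 v.2) μ)
    (hmean : ∀ j k, ∫ ω, X j k ω ∂μ = 0)
    (hvar : ∀ j k, ∫ ω, (X j k ω) ^ 2 ∂μ = 1)
    (hmom : ∀ l : ℕ, 1 ≤ l → ∃ C : ℝ, ∀ j k, ∫ ω, |X j k ω| ^ l ∂μ ≤ C)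
    (hUmeas : ∀ n, Measurable (U n))
    (hUrange : ∀ n, 1 ≤ n → ∀ ω, U n ω ∈ Finset.Icc 1 n)
    (hUunif : ∀ n, 1 ≤ n → ∀ r ∈ Finset.Icc 1 n, μ {ω | U n ω = r} = (n : ENNReal)⁻¹)
    (hUindep : ∀ n, Indep (MeasurableSpace.comap (U n) inferInstance)
      (⨆ v : ℕ × ℕ, MeasurableSpace.comap (X v.1 v.2) inferInstance) μ) :
    ∃ K : ℝ, ∀ n : ℕ, 1 ≤ n → ∀ t₁ t₂ t₃ : ℝ, 0 ≤ t₁ → t₁ ≤ t₂ → t₂ ≤ t₃ →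
      ∫ ω, |Yproc X U n t₃ ω - Yproc X U n t₂ ω| ^ 2
          * |Yproc X U n t₂ ω - Yproc X U n t₁ ω| ^ 2 ∂μ
        ≤ K * (t₃ - t₁) ^ 2 :=
  statement11_general μ X U hmeas hindep hmean hvar hUmeas hUindep
end
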